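/- Let n ≥ 2 and let (t₁, x₁), (t₂, x₂) ∈ ℝ × ℝⁿ with |x₁| < 1/2 and |x₂| < 1/2. If t₁ + |ω − x₁| = t₂ + |ω − x₂| for every unit vector ω ∈ ℝⁿ (|ω| = 1), then t₁ = t₂ and x₁ = x₂. -/
import Mathlib

open RealInnerProductSpace

lemma aux_arrival {E : Type*} [NormedAddCommGroup E] [InnerProductSpace ℝ E]
    (t₁ t₂ : ℝ) (x₁ x₂ : E) (hx₁ : ‖x₁‖ < 1/2) (hx₂ : ‖x₂‖ < 1/2)
    (hne : x₁ ≠ x₂)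
    (h : ∀ ω : E, ‖ω‖ = 1 → t₁ + ‖ω - x₁‖ = t₂ + ‖ω - x₂‖) :
    t₂ - t₁ = ‖x₂ - x₁‖ := by
  set d : ℝ := ‖x₂ - x₁‖ with hd_def
  clear_value d
  have hd : 0 < d := by
    rw [hd_def]; exact norm_pos_iff.mpr (sub_ne_zero.mpr (Ne.symm hne))
  set u : E := d⁻¹ • (x₂ - x₁) with hu_def
  clear_value u
  have hu : ‖u‖ = 1 := by
    rw [hu_def, norm_smul, Real.norm_eq_abs, abs_of_pos (inv_pos.mpr hd), ← hd_def]
    field_simp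
  have hdu : d • u = x₂ - x₁ := by
    rw [hu_def, smul_smul, mul_inv_cancel₀ hd.ne', one_smul]
  set a : ℝ := ⟪x₁, u⟫ with ha_def
  clear_value a
  have ha : |a| < 1/2 := by
    calc |a| = |⟪x₁, u⟫| := by rw [ha_def]
    _ ≤ ‖x₁‖ * ‖u‖ := abs_real_inner_le_norm x₁ u
    _ = ‖x₁‖ := by rw [hu, mul_one]
    _ < 1/2 := hx₁
  have ha2 := abs_lt.mp ha
  have hx2u : ⟪x₂, u⟫ = a + d := by
    have h1 : ⟪x₂ - x₁, u⟫ = d := by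
      rw [← hdu, real_inner_smul_left, real_inner_self_eq_norm_sq, hu]
      ring
    rw [inner_sub_left] at h1
    linarith
  have hx2u' : a + d < 1/2 := by
    have := real_inner_le_norm x₂ u
    rw [hu, mul_one] at this
    linarith [hx2u ▸ this]
  set r : ℝ := Real.sqrt (a ^ 2 + 1 - ‖x₁‖ ^ 2) with hr_def
  clear_value r
  have harg : (3:ℝ)/4 ≤ a ^ 2 + 1 - ‖x₁‖ ^ 2 := by
    nlinarith [sq_nonneg a, norm_nonneg x₁]
  have hr2 : r ^ 2 = a ^ 2 + 1 - ‖x₁‖ ^ 2 := by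
    rw [hr_def]; exact Real.sq_sqrt (by linarith)
  have hr : 1/2 < r := by
    nlinarith [Real.sqrt_nonneg (a ^ 2 + 1 - ‖x₁‖ ^ 2)]
  set s : ℝ := r - a with hs_def
  clear_value s
  have hs : 0 < s := by simp only [hs_def]; linarith
  have hsd : 0 < s - d := by simp only [hs_def]; linarith
  set ω : E := x₁ + s • u with hω_def
  clear_value ω
  have hω : ‖ω‖ = 1 := by
    have hsq : ‖ω‖ ^ 2 = 1 := by
      rw [hω_def, norm_add_sq_real, real_inner_smul_right, norm_smul, hu, mul_one,
        Real.norm_eq_abs, sq_abs, ← ha_def]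
      rw [hs_def]
      nlinarith [hr2]
    calc ‖ω‖ = Real.sqrt (‖ω‖ ^ 2) := (Real.sqrt_sq (norm_nonneg ω)).symm
    _ = 1 := by rw [hsq, Real.sqrt_one]
  have hω1 : ‖ω - x₁‖ = s := by
    have : ω - x₁ = s • u := by rw [hω_def]; abel
    rw [this, norm_smul, hu, mul_one, Real.norm_eq_abs, abs_of_pos hs]
  have hω2 : ‖ω - x₂‖ = s - d := by
    have : ω - x₂ = (s - d) • u := by
      rw [sub_smul, hdu, hω_def]; abel
    rw [this, norm_smul, hu, mul_one, Real.norm_eq_abs, abs_of_pos hsd]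
  have := h ω hω
  rw [hω1, hω2] at this
  linarith

/-- Injectivity of the boundary light observation map for the flat cylinder: if two
sources with `|x_i| < 1/2` have the same arrival time function `ω ↦ t_i + |ω - x_i|`
on the unit sphere, they coincide. -/
theorem arrival_time_injective (n : ℕ) (hn : 2 ≤ n) (t₁ t₂ : ℝ)
    (x₁ x₂ : EuclideanSpace ℝ (Fin n))
    (hx₁ : ‖x₁‖ < 1/2) (hx₂ : ‖x₂‖ < 1/2)
    (h : ∀ ω : EuclideanSpace ℝ (Fin n), ‖ω‖ = 1 → t₁ + ‖ω - x₁‖ = t₂ + ‖ω - x₂‖) :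
    t₁ = t₂ ∧ x₁ = x₂ := by
  have hx : x₁ = x₂ := by
    by_contra hne
    have h1 := aux_arrival t₁ t₂ x₁ x₂ hx₁ hx₂ hne h
    have h2 := aux_arrival t₂ t₁ x₂ x₁ hx₂ hx₁ (Ne.symm hne)
      (fun ω hω => (h ω hω).symm)
    have h3 : ‖x₂ - x₁‖ = ‖x₁ - x₂‖ := norm_sub_rev _ _
    have hpos : 0 < ‖x₂ - x₁‖ := norm_pos_iff.mpr (sub_ne_zero.mpr (Ne.symm hne))
    linarith
  subst hx
  refine ⟨?_, rfl⟩
  have hω : ‖(EuclideanSpace.single (⟨0, by omega⟩ : Fin n) (1:ℝ))‖ = 1 := by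
    rw [EuclideanSpace.norm_single]
    norm_num
  have := h _ hω
  linarith
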